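/- For any real numbers w_1,...,w_N with u_j = w_j − S_1/N, the identity N²Σ_4 − 4Σ_2² = (N²/2)Σ_{j,k}(u_j² − u_k²)² holds; consequently the modified estimator Ê_4 = (N²Σ_4 − 4Σ_2²)/(N^{\underline{4}} N³) is always nonnegative. -/

import Mathlib

/-!
Both statistics are halved pair sums, `Σ₂ = ½ ∑_{j,k} (w_j - w_k)²` and
`Σ₄ = ½ ∑_{j,k} (w_j - w_k)⁴`, so they do not change when the `w_j` are centred to `u_j`.
For centred data `Σ₂ = N ∑ u_j²` and `Σ₄ = N ∑ u_j⁴ + 3 (∑ u_j²)²`, hence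
`N²Σ₄ - 4Σ₂² = N² (N ∑ u_j⁴ - (∑ u_j²)²)`, which is again a halved pair sum, now of the
squares `u_j²`. The denominator `N^{\underline 4} N³` of `Ê₄` is a falling factorial times `N³`,
so it is nonnegative for every natural `N`.
-/

open Finset

namespace PowerSumStatistic

variable {ι : Type*} [Fintype ι]

section CommRing

variable {R : Type*} [CommRing R]

def powerSum (a : ι → R) (p : ℕ) : R := ∑ j, a j ^ p

def sigma2 (a : ι → R) : R := Fintype.card ι * powerSum a 2 - powerSum a 1 ^ 2

def sigma4 (a : ι → R) : R :=
  Fintype.card ι * powerSum a 4 - 4 * powerSum a 3 * powerSum a 1 + 3 * powerSum a 2 ^ 2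

lemma sum_sum_sub_sq (a : ι → R) : ∑ j, ∑ k, (a j - a k) ^ 2 = 2 * sigma2 a := by
  have h : ∀ j k, (a j - a k) ^ 2 = a j ^ 2 - 2 * (a j * a k) + a k ^ 2 := by
    intro j k; ring
  simp only [h, sum_add_distrib, sum_sub_distrib, ← mul_sum, ← sum_mul, sum_const, card_univ,
    nsmul_eq_mul, sigma2, powerSum, pow_one]
  ring

lemma sum_sum_sub_pow_four (a : ι → R) : ∑ j, ∑ k, (a j - a k) ^ 4 = 2 * sigma4 a := by
  have h : ∀ j k, (a j - a k) ^ 4 = a j ^ 4 - 4 * (a j ^ 3 * a k)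
      + 6 * (a j ^ 2 * a k ^ 2) - 4 * (a j * a k ^ 3) + a k ^ 4 := by
    intro j k; ring
  simp only [h, sum_add_distrib, sum_sub_distrib, ← mul_sum, ← sum_mul, sum_const, card_univ,
    nsmul_eq_mul, sigma4, powerSum, pow_one]
  ring

end CommRing

section Field

variable {K : Type*} [Field K] [CharZero K]

lemma sigma2_sub_const (a : ι → K) (c : K) : sigma2 (fun j => a j - c) = sigma2 a := by
  refine mul_left_cancel₀ two_ne_zero ?_
  simp only [← sum_sum_sub_sq, sub_sub_sub_cancel_right]

lemma sigma4_sub_const (a : ι → K) (c : K) : sigma4 (fun j => a j - c) = sigma4 a := by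
  refine mul_left_cancel₀ two_ne_zero ?_
  simp only [← sum_sum_sub_pow_four, sub_sub_sub_cancel_right]

lemma powerSum_one_sub_mean (a : ι → K) :
    powerSum (fun j => a j - powerSum a 1 / Fintype.card ι) 1 = 0 := by
  rcases isEmpty_or_nonempty ι with _ | _
  · simp [powerSum]
  · simp [powerSum, sum_sub_distrib, mul_div_cancel₀]

lemma sq_mul_sigma4_sub_four_mul_sigma2_sq_of_centered (u : ι → K) (hu : powerSum u 1 = 0) :
    (Fintype.card ι : K) ^ 2 * sigma4 u - 4 * sigma2 u ^ 2
      = (Fintype.card ι : K) ^ 2 / 2 * ∑ j, ∑ k, (u j ^ 2 - u k ^ 2) ^ 2 := by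
  have hsq := sum_sum_sub_sq fun j => u j ^ 2
  have hpow : ∀ p, powerSum (fun j => u j ^ 2) p = powerSum u (2 * p) := by
    simp [powerSum, pow_mul]
  rw [hsq, sigma2, sigma2, sigma4, hpow, hpow, hu]
  ring

end Field

end PowerSumStatistic

open PowerSumStatistic

theorem e4hat_identity_nonneg_general (N : ℕ) (w : Fin N → ℝ) :
    let S : ℕ → ℝ := fun p => ∑ j : Fin N, w j ^ p
    let Sig2 : ℝ := (N : ℝ) * S 2 - S 1 ^ 2
    let Sig4 : ℝ := (N : ℝ) * S 4 - 4 * S 3 * S 1 + 3 * S 2 ^ 2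
    let u : Fin N → ℝ := fun j => w j - S 1 / N
    let d4 : ℝ := (N : ℝ) * ((N : ℝ) - 1) * ((N : ℝ) - 2) * ((N : ℝ) - 3)
    ((N : ℝ) ^ 2 * Sig4 - 4 * Sig2 ^ 2
        = ((N : ℝ) ^ 2 / 2) * ∑ j : Fin N, ∑ k : Fin N, (u j ^ 2 - u k ^ 2) ^ 2)
    ∧ 0 ≤ ((N : ℝ) ^ 2 * Sig4 - 4 * Sig2 ^ 2) / (d4 * (N : ℝ) ^ 3) := by
  intro S Sig2 Sig4 u d4
  have hu : u = fun j => w j - powerSum w 1 / Fintype.card (Fin N) := by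
    simp [u, S, powerSum]
  have hSig2 : Sig2 = sigma2 u := by
    rw [hu, sigma2_sub_const]; simp [Sig2, S, sigma2, powerSum]
  have hSig4 : Sig4 = sigma4 u := by
    rw [hu, sigma4_sub_const]; simp [Sig4, S, sigma4, powerSum]
  have hid : (N : ℝ) ^ 2 * Sig4 - 4 * Sig2 ^ 2
      = ((N : ℝ) ^ 2 / 2) * ∑ j : Fin N, ∑ k : Fin N, (u j ^ 2 - u k ^ 2) ^ 2 := by
    have hcentered := sq_mul_sigma4_sub_four_mul_sigma2_sq_of_centered u (by
      rw [hu]; exact powerSum_one_sub_mean w)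
    rwa [Fintype.card_fin, ← hSig2, ← hSig4] at hcentered
  have hd4 : d4 = N.descFactorial 4 := by
    simp only [d4, ← descPochhammer_eval_eq_descFactorial, descPochhammer_succ_eval,
      descPochhammer_zero, Polynomial.eval_one]
    push_cast; ring
  refine ⟨hid, div_nonneg ?_ (by rw [hd4]; positivity)⟩
  rw [hid]
  positivity

/-- With `u_j = w_j − S₁/N`, the identity
`N²Σ₄ − 4Σ₂² = (N²/2)Σ_{j,k}(u_j² − u_k²)²` holds, hence the modified estimator
`Ê₄ = (N²Σ₄ − 4Σ₂²)/(N^{\underline 4} N³)` is always nonnegative. -/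
theorem e4hat_identity_nonneg (N : ℕ) (hN : 4 ≤ N) (w : Fin N → ℝ) :
    let S : ℕ → ℝ := fun p => ∑ j : Fin N, w j ^ p
    let Sig2 : ℝ := (N : ℝ) * S 2 - S 1 ^ 2
    let Sig4 : ℝ := (N : ℝ) * S 4 - 4 * S 3 * S 1 + 3 * S 2 ^ 2
    let u : Fin N → ℝ := fun j => w j - S 1 / N
    let d4 : ℝ := (N : ℝ) * ((N : ℝ) - 1) * ((N : ℝ) - 2) * ((N : ℝ) - 3)
    ((N : ℝ) ^ 2 * Sig4 - 4 * Sig2 ^ 2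
        = ((N : ℝ) ^ 2 / 2) * ∑ j : Fin N, ∑ k : Fin N, (u j ^ 2 - u k ^ 2) ^ 2)
    ∧ 0 ≤ ((N : ℝ) ^ 2 * Sig4 - 4 * Sig2 ^ 2) / (d4 * (N : ℝ) ^ 3) :=
  e4hat_identity_nonneg_general N w
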